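/- arXiv:2401.17140 — 2 statements merged into one kernel-verified Lean document; each statement's English description precedes it below -/
import Mathlib

section
/- The complex cosh function restricted to the open horizontal strip S_π = {z ∈ ℂ : 0 < Im z < π} is a bijection onto ℂ \ ((-∞,-1] ∪ [1,∞)). -/
open Complex Set

private lemma cosh_re' (z : ℂ) : (Complex.cosh z).re = Real.cosh z.re * Real.cos z.im := by
  rw [show z = ↑z.re + ↑z.im * I from (Complex.re_add_im z).symm, Complex.cosh_add,
    Complex.cosh_mul_I, Complex.sinh_mul_I]
  simp [Complex.cosh_ofReal_re, Complex.cos_ofReal_re, Complex.sinh_ofReal_re,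
    Complex.sin_ofReal_re, Complex.cosh_ofReal_im, Complex.cos_ofReal_im,
    Complex.sinh_ofReal_im, Complex.sin_ofReal_im]

private lemma cosh_im' (z : ℂ) : (Complex.cosh z).im = Real.sinh z.re * Real.sin z.im := by
  rw [show z = ↑z.re + ↑z.im * I from (Complex.re_add_im z).symm, Complex.cosh_add,
    Complex.cosh_mul_I, Complex.sinh_mul_I]
  simp [Complex.cosh_ofReal_re, Complex.cos_ofReal_re, Complex.sinh_ofReal_re,
    Complex.sin_ofReal_re, Complex.cosh_ofReal_im, Complex.cos_ofReal_im,
    Complex.sinh_ofReal_im, Complex.sin_ofReal_im]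

private lemma cosh_eq_cos (z : ℂ) : Complex.cosh z = Complex.cos (z * I) :=
  (Complex.cos_mul_I z).symm

private lemma cosh_per (z : ℂ) (k : ℤ) : Complex.cosh (z + 2 * k * Real.pi * I) = Complex.cosh z := by
  rw [cosh_eq_cos, cosh_eq_cos]
  have h : (z + 2 * k * Real.pi * I) * I = z * I - k * (2 * Real.pi) := by
    ring_nf
    rw [Complex.I_sq]
    ring
  rw [h, Complex.cos_sub_int_mul_two_pi]

private lemma strip_not_ray {z : ℂ} (hz : 0 < z.im ∧ z.im < Real.pi) :
    Complex.cosh z ∉ (Complex.ofReal '' Set.Iic (-1 : ℝ) ∪ Complex.ofReal '' Set.Ici (1 : ℝ)) := by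
  obtain ⟨h0, hπ⟩ := hz
  have hsin : 0 < Real.sin z.im := Real.sin_pos_of_pos_of_lt_pi h0 hπ
  have hcos1 : Real.cos z.im < 1 := by
    have := Real.cos_lt_cos_of_nonneg_of_le_pi le_rfl hπ.le h0
    simpa using this
  have hcos2 : -1 < Real.cos z.im := by
    have := Real.cos_lt_cos_of_nonneg_of_le_pi h0.le le_rfl hπ
    simpa using this
  rintro (⟨x, hx, hxz⟩ | ⟨x, hx, hxz⟩) <;>
  · have him : (Complex.cosh z).im = 0 := by rw [← hxz]; simp
    rw [cosh_im'] at him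
    have hre0 : z.re = 0 := by
      have := mul_eq_zero.1 him
      rcases this with h | h
      · exact Real.sinh_eq_zero.1 h
      · exact absurd h hsin.ne'
    have hre : (Complex.cosh z).re = Real.cos z.im := by
      rw [cosh_re', hre0]; simp
    have hxre : x = Real.cos z.im := by
      rw [← hre, ← hxz]; simp
    simp only [Set.mem_Iic, Set.mem_Ici] at hx
    nlinarith

theorem cosh_bijOn_strip :
    Set.BijOn Complex.cosh {z : ℂ | 0 < z.im ∧ z.im < Real.pi}
      (Set.univ \ (Complex.ofReal '' Set.Iic (-1 : ℝ) ∪ Complex.ofReal '' Set.Ici (1 : ℝ))) := by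
  have pi_pos := Real.pi_pos
  refine ⟨fun z hz => ⟨trivial, strip_not_ray hz⟩, ?_, ?_⟩
  · -- injectivity
    rintro a ⟨ha0, haπ⟩ b ⟨hb0, hbπ⟩ hab
    rw [cosh_eq_cos, cosh_eq_cos, Complex.cos_eq_cos_iff] at hab
    obtain ⟨k, hk | hk⟩ := hab
    · have him : -b.im = 2 * (k : ℝ) * Real.pi + (-a.im) := by
        have := congrArg Complex.re hk
        simpa using this
      have hk0 : k = 0 := by
        rcases lt_trichotomy k 0 with h | h | h
        · have : (k : ℝ) ≤ -1 := by exact_mod_cast Int.le_sub_one_of_lt h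
          nlinarith
        · exact h
        · have : (1 : ℝ) ≤ (k : ℝ) := by exact_mod_cast h
          nlinarith
      rw [hk0] at hk
      norm_num at hk
      exact hk.symm
    · exfalso
      have him : -b.im = 2 * (k : ℝ) * Real.pi + a.im := by
        have := congrArg Complex.re hk
        simpa [sub_eq_add_neg] using this
      rcases lt_trichotomy k 0 with h | h | h
      · have : (k : ℝ) ≤ -1 := by exact_mod_cast Int.le_sub_one_of_lt h
        nlinarith
      · rw [h] at him; push_cast at him; nlinarith
      · have : (1 : ℝ) ≤ (k : ℝ) := by exact_mod_cast h
        nlinarith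
  · -- surjectivity
    rintro c ⟨-, hc⟩
    obtain ⟨w, hw⟩ := Complex.cos_surjective c
    set z₀ : ℂ := w * (-I) with hz₀
    have hc0 : Complex.cosh z₀ = c := by
      rw [cosh_eq_cos, hz₀]
      have : w * -I * I = w := by
        simp [mul_assoc, Complex.I_mul_I]
      rw [this, hw]
    set k : ℤ := ⌊z₀.im / (2 * Real.pi)⌋ with hkdef
    set z₁ : ℂ := z₀ + 2 * ((-k : ℤ) : ℂ) * (Real.pi : ℂ) * I with hz₁
    have hc1 : Complex.cosh z₁ = c := by rw [hz₁]; rw [cosh_per z₀ (-k), hc0]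
    have him1 : z₁.im = z₀.im - 2 * k * Real.pi := by
      rw [hz₁]; push_cast; simp; ring
    have hfl : (k : ℝ) ≤ z₀.im / (2 * Real.pi) := Int.floor_le _
    have hfl' : z₀.im / (2 * Real.pi) < k + 1 := Int.lt_floor_add_one _
    have h1nn : 0 ≤ z₁.im := by
      rw [him1]
      have := mul_le_mul_of_nonneg_right hfl (le_of_lt (by positivity : (0:ℝ) < 2 * Real.pi))
      rw [div_mul_cancel₀] at this
      · linarith
      · positivity
    have h1lt : z₁.im < 2 * Real.pi := by
      rw [him1]
      have := mul_lt_mul_of_pos_right hfl' (by positivity : (0:ℝ) < 2 * Real.pi)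
      rw [div_mul_cancel₀] at this
      · nlinarith
      · positivity
    rcases eq_or_lt_of_le h1nn with h0 | h0
    · -- z₁.im = 0 : c is real ≥ 1, contradiction
      exfalso
      apply hc
      right
      refine ⟨(Complex.cosh z₁).re, ?_, ?_⟩
      · rw [cosh_re', ← h0]
        simp [Real.one_le_cosh]
      · rw [← hc1]
        apply Complex.ext <;> simp [cosh_im', ← h0]
    rcases lt_trichotomy z₁.im Real.pi with hπ1 | hπ1 | hπ1
    · exact ⟨z₁, ⟨h0, hπ1⟩, hc1⟩
    · -- z₁.im = π : c is real ≤ -1, contradiction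
      exfalso
      apply hc
      left
      refine ⟨(Complex.cosh z₁).re, ?_, ?_⟩
      · rw [cosh_re', hπ1]
        simp only [Real.cos_pi, mul_neg_one, Set.mem_Iic, neg_le_neg_iff]
        have := Real.one_le_cosh z₁.re
        linarith
      · rw [← hc1]
        apply Complex.ext <;> simp [cosh_im', hπ1]
    · -- π < z₁.im < 2π : reflect
      refine ⟨-z₁ + 2 * (1 : ℤ) * Real.pi * I, ⟨?_, ?_⟩, ?_⟩
      · simp; linarith
      · simp; linarith
      · rw [cosh_per, Complex.cosh_neg, hc1]
end

section
/- For any open set O in de Sitter space dS^d, the set C = {y ∈ ℝ^{1,d} : ∀x ∈ O, β(x,y) > -1} is convex, and the spacelike complement O' (the interior in dS^d of C ∩ dS^d) equals C° ∩ dS^d, where C° is the interior of C in ℝ^{1,d}. -/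
/-- The Lorentzian form on `ℝ^{1,d}`. -/
def lorentzForm (d : ℕ) (x y : Fin (d + 1) → ℝ) : ℝ :=
  x 0 * y 0 - ∑ i : Fin d, x i.succ * y i.succ

/-- De Sitter space in `ℝ^{1,d}`. -/
def deSitter (d : ℕ) : Set (Fin (d + 1) → ℝ) := {x | lorentzForm d x x = -1}

namespace DSaux

variable {d : ℕ}

lemma lf_symm (x y : Fin (d + 1) → ℝ) : lorentzForm d x y = lorentzForm d y x := by
  simp [lorentzForm, mul_comm]

lemma lf_combo (x y z : Fin (d + 1) → ℝ) (a b : ℝ) :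
    lorentzForm d x (a • y + b • z) = a * lorentzForm d x y + b * lorentzForm d x z := by
  simp only [lorentzForm, Pi.add_apply, Pi.smul_apply, smul_eq_mul]
  rw [show ∑ i : Fin d, x i.succ * (a * y i.succ + b * z i.succ)
      = a * ∑ i : Fin d, x i.succ * y i.succ + b * ∑ i : Fin d, x i.succ * z i.succ by
    rw [Finset.mul_sum, Finset.mul_sum, ← Finset.sum_add_distrib]
    exact Finset.sum_congr rfl fun i _ => by ring]
  ring

lemma lf_zero_right (x : Fin (d + 1) → ℝ) : lorentzForm d x 0 = 0 := by
  simp [lorentzForm]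

lemma lf_combo_left (x y z : Fin (d + 1) → ℝ) (a b : ℝ) :
    lorentzForm d (a • y + b • z) x = a * lorentzForm d y x + b * lorentzForm d z x := by
  rw [lf_symm, lf_combo, lf_symm x y, lf_symm x z]

lemma lf_expand (w v : Fin (d + 1) → ℝ) (a b : ℝ) :
    lorentzForm d (a • w + b • v) (a • w + b • v)
      = a ^ 2 * lorentzForm d w w + 2 * a * b * lorentzForm d w v
        + b ^ 2 * lorentzForm d v v := by
  rw [lf_combo_left, lf_combo, lf_combo, lf_symm v w]; ring

lemma convexC (O : Set (Fin (d + 1) → ℝ)) :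
    Convex ℝ {y | ∀ x ∈ O, lorentzForm d x y > -1} := by
  intro y hy z hz a b ha hb hab x hx
  have h1 := hy x hx
  have h2 := hz x hx
  show lorentzForm d x (a • y + b • z) > -1
  rw [lf_combo]
  rcases ha.eq_or_lt with h | h
  · have hb1 : b = 1 := by linarith
    rw [← h, hb1]; simpa using h2
  · nlinarith [mul_lt_mul_of_pos_left h1 h, mul_le_mul_of_nonneg_left h2.le hb]

lemma exists_support {C : Set (Fin (d + 1) → ℝ)} (hC : Convex ℝ C) {y : Fin (d + 1) → ℝ}
    (hyC : y ∈ C) (hni : y ∉ interior C) :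
    ∃ φ : (Fin (d + 1) → ℝ) →ₗ[ℝ] ℝ, φ ≠ 0 ∧ ∀ z ∈ C, φ z ≤ φ y := by
  rcases (interior C).eq_empty_or_nonempty with hint | ⟨a₀, ha₀⟩
  · have hspan : affineSpan ℝ C ≠ ⊤ := by
      intro h
      have := (hC.interior_nonempty_iff_affineSpan_eq_top).mpr h
      rw [hint] at this
      exact Set.not_nonempty_empty this
    have hCel : y ∈ affineSpan ℝ C := subset_affineSpan ℝ C hyC
    have hdir : (affineSpan ℝ C).direction ≠ ⊤ := by
      intro h
      exact hspan ((AffineSubspace.direction_eq_top_iff_of_nonempty ⟨y, hCel⟩).mp h)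
    obtain ⟨v, hv⟩ : ∃ v, v ∉ (affineSpan ℝ C).direction := by
      by_contra h
      push_neg at h
      exact hdir (Submodule.eq_top_iff'.mpr h)
    set p := (affineSpan ℝ C).direction with hp
    have hπv : p.mkQ v ≠ 0 := by
      rw [Submodule.mkQ_apply, Ne, Submodule.Quotient.mk_eq_zero]
      exact hv
    obtain ⟨g, hg⟩ : ∃ g : Module.Dual ℝ ((Fin (d + 1) → ℝ) ⧸ p), g (p.mkQ v) ≠ 0 := by
      by_contra h
      push_neg at h
      exact hπv ((Module.forall_dual_apply_eq_zero_iff ℝ _).mp h)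
    refine ⟨g.comp p.mkQ, ?_, ?_⟩
    · intro h
      exact hg (by simpa using DFunLike.congr_fun h v)
    · intro z hz
      have hzy : z - y ∈ p := by
        simpa using AffineSubspace.vsub_mem_direction (subset_affineSpan ℝ C hz) hCel
      have h0 : (g.comp p.mkQ) (z - y) = 0 := by
        have hmk : p.mkQ (z - y) = 0 := by
          rwa [Submodule.mkQ_apply, Submodule.Quotient.mk_eq_zero]
        simp [LinearMap.comp_apply, hmk]
      have hs := map_sub (g.comp p.mkQ) z y
      rw [h0] at hs
      have : (g.comp p.mkQ) z = (g.comp p.mkQ) y := by linarith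
      exact this.le
  · obtain ⟨f, hf⟩ := geometric_hahn_banach_open_point hC.interior isOpen_interior hni
    refine ⟨(f : (Fin (d + 1) → ℝ) →ₗ[ℝ] ℝ), ?_, ?_⟩
    · intro h
      have h1 := hf a₀ ha₀
      have h2 : f a₀ = 0 := DFunLike.congr_fun h a₀
      have h3 : f y = 0 := DFunLike.congr_fun h y
      rw [h2, h3] at h1
      exact lt_irrefl 0 h1
    · intro z hz
      show f z ≤ f y
      by_contra hlt
      push_neg at hlt
      have hDpos : 0 < f z - f y := sub_pos.mpr hlt
      set Δ := |f a₀ - f z| with hΔ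
      have hΔ0 : 0 ≤ Δ := abs_nonneg _
      set t := min 1 ((f z - f y) / (1 + Δ)) with htdef
      have ht0 : 0 < t := lt_min one_pos (div_pos hDpos (by linarith))
      have ht1 : t ≤ 1 := min_le_left _ _
      have hmem := hC.combo_self_interior_mem_interior hz ha₀ (sub_nonneg.mpr ht1) ht0
        (by ring)
      have hlt2 := hf _ hmem
      simp only [map_add, map_smul, smul_eq_mul] at hlt2
      have htD : t * (1 + Δ) ≤ f z - f y := by
        have hmr := min_le_right 1 ((f z - f y) / (1 + Δ))
        have h1Δ : (0:ℝ) < 1 + Δ := by linarith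
        calc t * (1 + Δ) ≤ ((f z - f y) / (1 + Δ)) * (1 + Δ) :=
              mul_le_mul_of_nonneg_right hmr h1Δ.le
          _ = f z - f y := div_mul_cancel₀ _ h1Δ.ne'
      have habs : -Δ ≤ f a₀ - f z := neg_abs_le _
      have hkey : t * (-Δ) ≤ t * (f a₀ - f z) := mul_le_mul_of_nonneg_left habs ht0.le
      nlinarith [hlt2, htD, hkey, ht0, hΔ0]

set_option maxHeartbeats 1000000 in
lemma mem_interior_C (O : Set (Fin (d + 1) → ℝ)) {y : Fin (d + 1) → ℝ}
    (hyD : y ∈ deSitter d) {U : Set (Fin (d + 1) → ℝ)} (hU : IsOpen U) (hyU : y ∈ U)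
    (hUC : ∀ w, w ∈ U → w ∈ deSitter d → ∀ x ∈ O, lorentzForm d x w > -1) :
    y ∈ interior {y | ∀ x ∈ O, lorentzForm d x y > -1} := by
  set C : Set (Fin (d + 1) → ℝ) := {y | ∀ x ∈ O, lorentzForm d x y > -1} with hCdef
  have hC : Convex ℝ C := convexC O
  have h0 : (0 : Fin (d + 1) → ℝ) ∈ C := by
    intro x hx
    show lorentzForm d x 0 > -1
    rw [lf_zero_right]; norm_num
  have hyy : lorentzForm d y y = -1 := hyD
  have hyC : y ∈ C := hUC y hyU hyD
  by_contra hni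
  obtain ⟨φ, hφ0, hφ⟩ := exists_support hC hyC hni
  have hy0 : 0 ≤ φ y := by simpa [map_zero] using hφ 0 h0
  have curve : ∀ w, lorentzForm d y w = 0 → 0 < lorentzForm d w w → φ w = 0 ∧ φ y = 0 := by
    intro w hyw hww
    set q := lorentzForm d w w with hq
    set c : ℝ → (Fin (d + 1) → ℝ) := fun s => Real.sqrt (1 + s ^ 2 * q) • y + s • w with hc
    have harg : ∀ s : ℝ, (0:ℝ) < 1 + s ^ 2 * q := by
      intro s; nlinarith [sq_nonneg s, hww, mul_nonneg (sq_nonneg s) hww.le]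
    have hcd : ∀ s, c s ∈ deSitter d := by
      intro s
      show lorentzForm d (c s) (c s) = -1
      simp only [hc]
      rw [lf_combo_left, lf_combo, lf_combo, hyy, hyw, lf_symm w y, hyw]
      have hsq : Real.sqrt (1 + s ^ 2 * q) * Real.sqrt (1 + s ^ 2 * q) = 1 + s ^ 2 * q :=
        Real.mul_self_sqrt (harg s).le
      linear_combination (-1 : ℝ) * hsq
    have hcont : Continuous c := by
      apply Continuous.add
      · exact (Real.continuous_sqrt.comp (by continuity)).smul continuous_const
      · exact continuous_id.smul continuous_const
    have hc0 : c 0 = y := by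
      simp [hc, Real.sqrt_one]
    have hev : ∀ᶠ s in nhds (0:ℝ), c s ∈ U :=
      hcont.continuousAt.eventually_mem (by rw [hc0]; exact hU.mem_nhds hyU)
    obtain ⟨ε, hε, hball⟩ := Metric.eventually_nhds_iff_ball.mp hev
    have hineq : ∀ s : ℝ, |s| < ε → Real.sqrt (1 + s ^ 2 * q) * φ y + s * φ w ≤ φ y := by
      intro s hs
      have hmem : c s ∈ U := hball s (by simpa [Metric.mem_ball, Real.dist_eq] using hs)
      have hCm : c s ∈ C := hUC _ hmem (hcd s)
      have h := hφ _ hCm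
      simp only [hc, map_add, map_smul, smul_eq_mul] at h
      exact h
    have hε2 : |ε / 2| < ε := by
      rw [abs_of_pos (by linarith)]; linarith
    have hε2' : |(-(ε / 2))| < ε := by rw [abs_neg]; exact hε2
    have h1 := hineq (ε / 2) hε2
    have h2 := hineq (-(ε / 2)) hε2'
    rw [show (-(ε / 2)) ^ 2 = (ε / 2) ^ 2 by ring] at h2
    have hr : 1 < Real.sqrt (1 + (ε / 2) ^ 2 * q) := by
      rw [Real.lt_sqrt (by norm_num : (0:ℝ) ≤ 1)]
      nlinarith [mul_pos (pow_pos (by linarith : (0:ℝ) < ε / 2) 2) hww]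
    have hA : φ y = 0 := le_antisymm (by nlinarith [h1, h2, hr]) hy0
    rw [hA] at h1 h2
    simp only [mul_zero, zero_add] at h1 h2
    have hw1 : φ w ≤ 0 := by nlinarith [h1, hε]
    have hw2 : 0 ≤ φ w := by nlinarith [h2, hε]
    exact ⟨le_antisymm hw1 hw2, hA⟩
  set e0 : Fin (d + 1) → ℝ := Pi.single 0 1 with he0
  have he0e0 : lorentzForm d e0 e0 = 1 := by
    simp [lorentzForm, he0, Pi.single_eq_same, Pi.single_eq_of_ne (Fin.succ_ne_zero _)]
  have hye0 : lorentzForm d y e0 = y 0 := by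
    rw [lf_symm]
    simp [lorentzForm, he0, Pi.single_eq_same, Pi.single_eq_of_ne (Fin.succ_ne_zero _)]
  set u : Fin (d + 1) → ℝ := (1:ℝ) • e0 + (y 0) • y with hu
  have hyu : lorentzForm d y u = 0 := by
    rw [hu, lf_combo, hye0, hyy]; ring
  have he0y : lorentzForm d e0 y = y 0 := (lf_symm e0 y).trans hye0
  have huu : lorentzForm d u u = 1 + y 0 ^ 2 := by
    rw [hu, lf_combo_left, lf_combo, lf_combo, he0e0, he0y, hye0, hyy]; ring
  have hu0 : 0 < lorentzForm d u u := by rw [huu]; positivity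
  obtain ⟨hφu, hφy⟩ := curve u hyu hu0
  have hperp : ∀ w, lorentzForm d y w = 0 → φ w = 0 := by
    intro w hw
    set T := Real.sqrt (1 + |lorentzForm d w w|) with hT
    have hT0 : 0 ≤ T := Real.sqrt_nonneg _
    have hT2 : T ^ 2 = 1 + |lorentzForm d w w| := Real.sq_sqrt (by positivity)
    have habs : -|lorentzForm d w w| ≤ lorentzForm d w w := neg_abs_le _
    rcases le_or_gt 0 (lorentzForm d w u) with hwu | hwu
    · have h1 : lorentzForm d y ((1:ℝ) • w + T • u) = 0 := by
        rw [lf_combo, hw, hyu]; ring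
      have h2 : 0 < lorentzForm d ((1:ℝ) • w + T • u) ((1:ℝ) • w + T • u) := by
        rw [lf_expand, huu]
        nlinarith [mul_nonneg hT0 hwu, hT2, habs, sq_nonneg (y 0),
          mul_nonneg (mul_nonneg hT0 hT0) (sq_nonneg (y 0))]
      obtain ⟨hφw', _⟩ := curve _ h1 h2
      simp only [map_add, map_smul, smul_eq_mul, one_mul, hφu, mul_zero, add_zero] at hφw'
      exact hφw'
    · have h1 : lorentzForm d y ((1:ℝ) • w + (-T) • u) = 0 := by
        rw [lf_combo, hw, hyu]; ring
      have h2 : 0 < lorentzForm d ((1:ℝ) • w + (-T) • u) ((1:ℝ) • w + (-T) • u) := by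
        rw [lf_expand, huu]
        nlinarith [mul_nonneg hT0 (neg_nonneg.mpr hwu.le), hT2, habs, sq_nonneg (y 0),
          mul_nonneg (mul_nonneg hT0 hT0) (sq_nonneg (y 0))]
      obtain ⟨hφw', _⟩ := curve _ h1 h2
      simp only [map_add, map_smul, smul_eq_mul, one_mul, hφu, mul_zero, add_zero,
        neg_mul, neg_zero] at hφw'
      exact hφw'
  refine hφ0 (LinearMap.ext fun z => ?_)
  have hz : lorentzForm d y ((1:ℝ) • z + (lorentzForm d y z) • y) = 0 := by
    rw [lf_combo, hyy]; ring
  have hz0 := hperp _ hz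
  simp only [map_add, map_smul, smul_eq_mul, one_mul, hφy, mul_zero, add_zero] at hz0
  simpa using hz0

end DSaux

theorem spacelike_complement_eq_interior_inter (d : ℕ) (O : Set (Fin (d + 1) → ℝ))
    (hO : O ⊆ deSitter d)
    (hOopen : ∃ U : Set (Fin (d + 1) → ℝ), IsOpen U ∧ O = U ∩ deSitter d) :
    Convex ℝ {y | ∀ x ∈ O, lorentzForm d x y > -1} ∧
    Subtype.val '' interior {y : deSitter d | ∀ x ∈ O, lorentzForm d x y.val > -1} =
      interior {y | ∀ x ∈ O, lorentzForm d x y > -1} ∩ deSitter d := by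
  refine ⟨DSaux.convexC O, ?_⟩
  apply Set.Subset.antisymm
  · rintro _ ⟨⟨y, hyD⟩, hyi, rfl⟩
    obtain ⟨V, hV, hVeq⟩ := isOpen_induced_iff.mp
      (isOpen_interior (s := {y : deSitter d | ∀ x ∈ O, lorentzForm d x y.val > -1}))
    refine ⟨?_, hyD⟩
    have hyV : y ∈ V := by
      have : (⟨y, hyD⟩ : deSitter d) ∈ Subtype.val ⁻¹' V := hVeq ▸ hyi
      exact this
    refine DSaux.mem_interior_C O hyD hV hyV ?_
    intro w hwU hwD x hx
    have : (⟨w, hwD⟩ : deSitter d) ∈ interior {y : deSitter d | ∀ x ∈ O, lorentzForm d x y.val > -1} := by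
      rw [← hVeq]; exact hwU
    exact interior_subset this x hx
  · rintro z ⟨hzi, hzD⟩
    refine ⟨⟨z, hzD⟩, ?_, rfl⟩
    have hsub : (Subtype.val ⁻¹' interior {y | ∀ x ∈ O, lorentzForm d x y > -1} :
        Set (deSitter d)) ⊆ {y : deSitter d | ∀ x ∈ O, lorentzForm d x y.val > -1} :=
      fun w hw => by
        have hw' : (w : Fin (d + 1) → ℝ) ∈ {y | ∀ x ∈ O, lorentzForm d x y > -1} :=
          interior_subset hw
        exact hw'
    exact interior_maximal hsub (isOpen_interior.preimage continuous_subtype_val) hzi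
end
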